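/- Let A = ∑_{n=0}^{L-1} √(n+1) |e_n⟩⟨e_{n+1}| (the truncated boson matrix) on ℂ^{L+1} and K = ((q−1)/(L+1)) ∑_{n=0}^{L-1} n |e_n⟩⟨e_n| + ((1+qL)/(L+1)) |e_L⟩⟨e_L|. Then A A† − q A† A = 1 − (L+1)K, i.e., the truncated boson also satisfies the truncated q-mutation relation with this choice of K. -/

import Mathlib

/-!
`A` is the weighted shift `e_{n+1} ↦ √(n+1) e_n`, so `A A†` and `A† A` are both diagonal, with
entries `n + 1` placed at index `n` and at index `n + 1` respectively. Since `K` is diagonal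
too, the relation is an identity between diagonal entries: at `n < L` it reads
`(n + 1) - q n = 1 - (q - 1) n`, and at `L` it reads `-q L = 1 - (1 + q L)`.
-/

open Matrix

namespace Matrix

variable {ι l m n α : Type*} [Fintype ι] [DecidableEq l] [DecidableEq m] [DecidableEq n]

theorem sum_single_mul_sum_single_of_injective [Fintype m] [NonUnitalNonAssocSemiring α]
    (f : ι → l) (g : ι → m) (h : ι → n) (hg : g.Injective) (a b : ι → α) :
    (∑ i, single (f i) (g i) (a i)) * ∑ i, single (g i) (h i) (b i) =
      ∑ i, single (f i) (h i) (a i * b i) := by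
  rw [Matrix.sum_mul]
  refine Finset.sum_congr rfl fun i _ => ?_
  rw [Matrix.mul_sum, Finset.sum_eq_single i (fun j _ hji => single_mul_single_of_ne _ _ _ _ (hg.ne hji.symm) _)
    (fun hi => absurd (Finset.mem_univ i) hi), single_mul_single_same]

end Matrix

section WeightedShift

variable {L : ℕ} {α : Type*} [NonUnitalNonAssocSemiring α]

def weightedShift (w : Fin L → α) : Matrix (Fin (L + 1)) (Fin (L + 1)) α :=
  ∑ n, single n.castSucc n.succ (w n)

variable [StarAddMonoid α]

theorem conjTranspose_weightedShift (w : Fin L → α) :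
    (weightedShift w)ᴴ = ∑ n, single n.succ n.castSucc (star (w n)) := by
  simp only [weightedShift, conjTranspose_sum, conjTranspose_single]

theorem weightedShift_mul_conjTranspose (w : Fin L → α) :
    weightedShift w * (weightedShift w)ᴴ = diagonal (Fin.snoc (fun n => w n * star (w n)) 0) := by
  rw [conjTranspose_weightedShift, weightedShift,
    sum_single_mul_sum_single_of_injective _ _ _ (Fin.succ_injective L), ← sum_single_eq_diagonal,
    Fin.sum_univ_castSucc]
  simp

theorem conjTranspose_weightedShift_mul (w : Fin L → α) :
    (weightedShift w)ᴴ * weightedShift w = diagonal (Fin.cons 0 fun n => star (w n) * w n) := by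
  rw [conjTranspose_weightedShift, weightedShift,
    sum_single_mul_sum_single_of_injective _ _ _ (Fin.castSucc_injective L),
    ← sum_single_eq_diagonal, Fin.sum_univ_succ]
  simp

end WeightedShift

theorem truncated_boson_qmutator (L : ℕ) (q : ℝ)
    (A : Matrix (Fin (L+1)) (Fin (L+1)) ℂ)
    (hA : A = ∑ n : Fin L, (Real.sqrt (n+1) : ℂ) •
      Matrix.single n.castSucc n.succ 1)
    (K : Matrix (Fin (L+1)) (Fin (L+1)) ℂ)
    (hK : K = (((q - 1) / (L+1) : ℝ) : ℂ) •
        (∑ n : Fin L, ((n : ℕ) : ℂ) • Matrix.single n.castSucc n.castSucc 1) +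
      (((1 + q * L) / (L+1) : ℝ) : ℂ) •
        Matrix.single (Fin.last L) (Fin.last L) 1) :
    A * Aᴴ - (q : ℂ) • (Aᴴ * A) = 1 - ((L+1 : ℕ) : ℂ) • K := by
  have hA' : A = weightedShift fun n : Fin L => (Real.sqrt (n + 1) : ℂ) := by
    simp only [hA, weightedShift, smul_single, smul_eq_mul, mul_one]
  have hsq (n : Fin L) : (Real.sqrt (n + 1) : ℂ) * star (Real.sqrt (n + 1) : ℂ) = n + 1 := by
    rw [Complex.star_def, Complex.conj_ofReal, ← Complex.ofReal_mul,
      Real.mul_self_sqrt (by positivity)]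
    norm_cast
  have hcons : (Fin.cons 0 fun n : Fin L => ((n : ℕ) : ℂ) + 1) =
      fun i : Fin (L + 1) => ((i : ℕ) : ℂ) := by
    funext i; cases i using Fin.cases <;> simp
  have hK' : K = diagonal (Fin.snoc (fun n : Fin L => (((q - 1) / (L + 1) : ℝ) : ℂ) * n)
      (((1 + q * L) / (L + 1) : ℝ) : ℂ)) := by
    rw [hK, ← sum_single_eq_diagonal, Fin.sum_univ_castSucc]
    simp [Finset.smul_sum, smul_single]
  rw [hA', weightedShift_mul_conjTranspose, conjTranspose_weightedShift_mul, hK']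
  simp only [hsq, mul_comm (star _), hcons]
  rw [← diagonal_one, ← diagonal_smul, ← diagonal_smul, diagonal_sub, diagonal_sub]
  congr 1; funext i
  cases i using Fin.lastCases with
  | last =>
    simp only [Fin.snoc_last, Fin.val_last, Pi.smul_apply, smul_eq_mul]
    push_cast
    field_simp
    ring
  | cast n =>
    simp only [Fin.snoc_castSucc, Fin.val_castSucc, Pi.smul_apply, smul_eq_mul]
    push_cast
    field_simp
    ring
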